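/- arXiv:1604.02681 — 6 statements merged into one kernel-verified Lean document; each statement's English description precedes it below -/
import Mathlib

section
/- For α ∈ (1,2), there is a constant c_α > 0 such that for all real a, b: ∫₀^∞ |cos(ar) − cos(br)| r^{-(1+α)} dr ≤ c_α (|a|+|b|)^{α−1} |a−b|. -/
open MeasureTheory Real Set

lemma cos_diff_lip (x y : ℝ) : |Real.cos x - Real.cos y| ≤ |x - y| := by
  rw [Real.cos_sub_cos, abs_mul, abs_mul]
  have h1 : |Real.sin ((x + y) / 2)| ≤ 1 := Real.abs_sin_le_one _
  have h2 : |Real.sin ((x - y) / 2)| ≤ |x - y| / 2 := by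
    refine (Real.abs_sin_le_abs).trans ?_
    rw [abs_div, abs_two]
  have hn : |(-2 : ℝ)| = 2 := by norm_num
  rw [hn]
  nlinarith [abs_nonneg (Real.sin ((x + y) / 2)), abs_nonneg (Real.sin ((x - y) / 2)),
    abs_nonneg (x - y)]

lemma cos_diff_quad (x y : ℝ) : |Real.cos x - Real.cos y| ≤ (|x| + |y|) * |x - y| / 2 := by
  rw [Real.cos_sub_cos, abs_mul, abs_mul]
  have h1 : |Real.sin ((x + y) / 2)| ≤ (|x| + |y|) / 2 := by
    refine (Real.abs_sin_le_abs).trans ?_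
    rw [abs_div, abs_two]
    have := abs_add_le x y
    linarith
  have h2 : |Real.sin ((x - y) / 2)| ≤ |x - y| / 2 := by
    refine (Real.abs_sin_le_abs).trans ?_
    rw [abs_div, abs_two]
  have hn : |(-2 : ℝ)| = 2 := by norm_num
  rw [hn]
  nlinarith [abs_nonneg (Real.sin ((x + y) / 2)), abs_nonneg (Real.sin ((x - y) / 2)),
    abs_nonneg x, abs_nonneg y, abs_nonneg (x - y)]

/-- Lemma 2.6(iii), cosine part: for `α ∈ (1,2)` there is `c_α > 0` with
`∫₀^∞ |cos(ar) − cos(br)| r^{-(1+α)} dr ≤ c_α (|a|+|b|)^{α−1} |a−b|`. -/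
theorem stmt2 (α : ℝ) (hα : α ∈ Set.Ioo (1:ℝ) 2) :
    ∃ c > (0:ℝ), ∀ a b : ℝ,
      (∫ r in Set.Ioi (0:ℝ), |Real.cos (a * r) - Real.cos (b * r)| / r ^ (1 + α))
        ≤ c * (|a| + |b|) ^ (α - 1) * |a - b| := by
  obtain ⟨hα1, hα2⟩ := hα
  have h2α : (0:ℝ) < 2 - α := by linarith
  have hα1' : (0:ℝ) < α - 1 := by linarith
  refine ⟨1 / (2 * (2 - α)) + 1 / (α - 1),
    add_pos (by positivity) (by positivity), ?_⟩
  intro a b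
  by_cases hab : a = b
  · subst hab
    simp only [sub_self, abs_zero, zero_div, integral_zero, mul_zero]
    exact le_refl 0
  set f : ℝ → ℝ := fun r => |Real.cos (a * r) - Real.cos (b * r)| / r ^ (1 + α) with hf_def
  set s := |a| + |b| with hs_def
  set d := |a - b| with hd_def
  have hd : 0 < d := abs_pos.2 (sub_ne_zero.2 hab)
  have hds : d ≤ s := abs_sub a b
  have hs : 0 < s := lt_of_lt_of_le hd hds
  set R := s⁻¹ with hR_def
  have hR : 0 < R := inv_pos.2 hs
  have hmeas : Measurable f := by fun_prop
  -- pointwise bounds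
  have hb1 : ∀ r ∈ Ioc (0:ℝ) R, f r ≤ s * d / 2 * r ^ (1 - α) := by
    intro r hr
    have hr0 : 0 < r := hr.1
    have hnum : |Real.cos (a * r) - Real.cos (b * r)| ≤ s * d / 2 * r ^ 2 := by
      have h := cos_diff_quad (a * r) (b * r)
      have h1 : |a * r| = |a| * r := by rw [abs_mul, abs_of_pos hr0]
      have h2 : |b * r| = |b| * r := by rw [abs_mul, abs_of_pos hr0]
      have h3 : |a * r - b * r| = d * r := by rw [← sub_mul, abs_mul, abs_of_pos hr0]
      rw [h1, h2, h3] at h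
      nlinarith [abs_nonneg a, abs_nonneg b, abs_nonneg (a - b), sq_nonneg r]
    have hpow : r ^ (1 - α) = r ^ (2:ℝ) / r ^ (1 + α) := by
      rw [← Real.rpow_sub hr0, show (2:ℝ) - (1 + α) = 1 - α by ring]
    have h2r : r ^ (2:ℝ) = r ^ 2 := by
      rw [show (2:ℝ) = ((2:ℕ):ℝ) by norm_num, Real.rpow_natCast]
    calc f r ≤ (s * d / 2 * r ^ 2) / r ^ (1 + α) :=
          div_le_div_of_nonneg_right hnum (Real.rpow_pos_of_pos hr0 _).le
      _ = s * d / 2 * r ^ (1 - α) := by rw [hpow, h2r, mul_div_assoc]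
  have hb2 : ∀ r ∈ Ioi R, f r ≤ d * r ^ (-α) := by
    intro r hr
    have hr0 : 0 < r := lt_trans hR hr
    have hnum : |Real.cos (a * r) - Real.cos (b * r)| ≤ d * r := by
      have h := cos_diff_lip (a * r) (b * r)
      rwa [← sub_mul, abs_mul, abs_of_pos hr0] at h
    have hpow : r ^ (-α) = r / r ^ (1 + α) := by
      nth_rewrite 2 [show r = r ^ (1:ℝ) by rw [Real.rpow_one]]
      rw [← Real.rpow_sub hr0, show (1:ℝ) - (1 + α) = -α by ring]
    calc f r ≤ (d * r) / r ^ (1 + α) :=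
          div_le_div_of_nonneg_right hnum (Real.rpow_pos_of_pos hr0 _).le
      _ = d * r ^ (-α) := by rw [hpow, mul_div_assoc]
  -- integrability of the bounding functions
  have hg1 : IntegrableOn (fun r : ℝ => s * d / 2 * r ^ (1 - α)) (Ioc 0 R) :=
    ((intervalIntegral.intervalIntegrable_rpow' (by linarith : (-1:ℝ) < 1 - α)
      (a := 0) (b := R)).const_mul (s * d / 2)).1
  have hg2 : IntegrableOn (fun r : ℝ => d * r ^ (-α)) (Ioi R) :=
    (integrableOn_Ioi_rpow_of_lt (by linarith : -α < -1) hR).const_mul d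
  -- integrability of f on each piece
  have hf1 : IntegrableOn f (Ioc 0 R) := by
    refine hg1.mono' hmeas.aestronglyMeasurable.restrict ?_
    filter_upwards [ae_restrict_mem measurableSet_Ioc] with r hr
    rw [Real.norm_eq_abs,
      abs_of_nonneg (div_nonneg (abs_nonneg _) (Real.rpow_pos_of_pos hr.1 _).le)]
    exact hb1 r hr
  have hf2 : IntegrableOn f (Ioi R) := by
    refine hg2.mono' hmeas.aestronglyMeasurable.restrict ?_
    filter_upwards [ae_restrict_mem measurableSet_Ioi] with r hr
    rw [Real.norm_eq_abs,
      abs_of_nonneg (div_nonneg (abs_nonneg _) (Real.rpow_pos_of_pos (lt_trans hR hr) _).le)]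
    exact hb2 r hr
  -- split the integral
  have hsplit : (∫ r in Ioi (0:ℝ), f r) = (∫ r in Ioc 0 R, f r) + ∫ r in Ioi R, f r := by
    rw [← Ioc_union_Ioi_eq_Ioi hR.le,
      setIntegral_union (Ioc_disjoint_Ioi le_rfl) measurableSet_Ioi hf1 hf2]
  -- evaluate the bounding integrals
  have hi1 : (∫ r in Ioc (0:ℝ) R, f r) ≤ s * d / 2 * (R ^ (2 - α) / (2 - α)) := by
    refine le_trans (setIntegral_mono_on hf1 hg1 measurableSet_Ioc hb1) ?_
    rw [integral_const_mul]
    have hI : (∫ r in Ioc (0:ℝ) R, r ^ (1 - α)) = R ^ (2 - α) / (2 - α) := by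
      rw [← intervalIntegral.integral_of_le hR.le,
        integral_rpow (Or.inl (by linarith : (-1:ℝ) < 1 - α))]
      rw [Real.zero_rpow (by intro h; apply absurd h; intro h'; linarith : (1 - α) + 1 ≠ 0)]
      rw [show (1 - α) + 1 = 2 - α by ring]
      ring
    rw [hI]
  have hi2 : (∫ r in Ioi R, f r) ≤ d * (R ^ (1 - α) / (α - 1)) := by
    refine le_trans (setIntegral_mono_on hf2 hg2 measurableSet_Ioi hb2) ?_
    rw [integral_const_mul]
    have hI : (∫ r in Ioi R, r ^ (-α)) = R ^ (1 - α) / (α - 1) := by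
      rw [integral_Ioi_rpow_of_lt (by linarith : -α < -1) hR]
      rw [show -α + 1 = 1 - α by ring, div_eq_div_iff (by linarith : (1:ℝ) - α ≠ 0)
        (by linarith : α - 1 ≠ 0)]
      ring
    rw [hI]
  -- exponent arithmetic
  have e1 : R ^ (2 - α) = s ^ (α - 2) := by
    rw [hR_def, Real.inv_rpow hs.le, ← Real.rpow_neg hs.le, show -(2 - α) = α - 2 by ring]
  have e2 : R ^ (1 - α) = s ^ (α - 1) := by
    rw [hR_def, Real.inv_rpow hs.le, ← Real.rpow_neg hs.le, show -(1 - α) = α - 1 by ring]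
  have e3 : s * s ^ (α - 2) = s ^ (α - 1) := by
    have h := Real.rpow_add hs 1 (α - 2)
    rw [Real.rpow_one] at h
    rw [show (1:ℝ) + (α - 2) = α - 1 by ring] at h
    exact h.symm
  have hfinal : s * d / 2 * (R ^ (2 - α) / (2 - α)) + d * (R ^ (1 - α) / (α - 1))
      = (1 / (2 * (2 - α)) + 1 / (α - 1)) * s ^ (α - 1) * d := by
    rw [e1, e2, ← e3]
    field_simp
  rw [hf_def] at hsplit ⊢
  calc (∫ r in Ioi (0:ℝ), |Real.cos (a * r) - Real.cos (b * r)| / r ^ (1 + α))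
      = (∫ r in Ioc (0:ℝ) R, f r) + ∫ r in Ioi R, f r := hsplit
    _ ≤ s * d / 2 * (R ^ (2 - α) / (2 - α)) + d * (R ^ (1 - α) / (α - 1)) := add_le_add hi1 hi2
    _ = (1 / (2 * (2 - α)) + 1 / (α - 1)) * s ^ (α - 1) * d := hfinal
end

section
/- For α ∈ (1,2), there is a constant c_α > 0 such that for all real a, b: ∫₀^∞ |(a−b)r − (sin(ar) − sin(br))| r^{-(1+α)} dr ≤ c_α (|a|+|b|)^{α−1} |a−b|. -/
open MeasureTheory Real Set

/-! Write the numerator as `g a - g b` with `g t = t r - sin (t r)`. Since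
`0 ≤ g' t = r (1 - cos (t r)) ≤ t² r³ / 2`, and trivially `|g a - g b| ≤ 2 r |a - b|`, the integrand
is at most `|a - b| · min (M² r^{2-α} / 2, 2 r^{-α})` with `M = |a| + |b|`. Splitting the integral
at `r = 1 / M`, both pieces are `O(|a - b| M^{α-1})`. -/

lemma abs_sub_sin_sub_sin_le_two_mul (a b : ℝ) {r : ℝ} (hr : 0 ≤ r) :
    |(a - b) * r - (sin (a * r) - sin (b * r))| ≤ 2 * r * |a - b| := by
  calc |(a - b) * r - (sin (a * r) - sin (b * r))|
      ≤ |(a - b) * r| + |sin (a * r) - sin (b * r)| := abs_sub _ _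
    _ ≤ |(a - b) * r| + |a * r - b * r| := add_le_add le_rfl (abs_sin_sub_sin_le _ _)
    _ = 2 * r * |a - b| := by rw [← sub_mul, abs_mul, abs_of_nonneg hr]; ring

lemma abs_sub_sin_sub_sin_le_cube (a b : ℝ) {r : ℝ} (hr : 0 ≤ r) :
    |(a - b) * r - (sin (a * r) - sin (b * r))| ≤ (|a| + |b|) ^ 2 * r ^ 3 / 2 * |a - b| := by
  have hderiv : ∀ t ∈ uIcc b a, HasDerivWithinAt (fun t ↦ t * r - sin (t * r))
      (r - cos (t * r) * r) (uIcc b a) t := fun t _ ↦ by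
    have h := (hasDerivAt_id t).mul_const r
    simp only [id, one_mul] at h
    exact (h.sub h.sin).hasDerivWithinAt
  have hbound : ∀ t ∈ uIcc b a, ‖r - cos (t * r) * r‖ ≤ (|a| + |b|) ^ 2 * r ^ 3 / 2 := by
    intro t ht
    have ht' : |t| ≤ |a| + |b| := by
      rcases mem_uIcc.1 ht with ⟨h₁, h₂⟩ | ⟨h₁, h₂⟩ <;>
        exact (abs_le_max_abs_abs h₁ h₂).trans (max_le (by simp) (by simp))
    have hcos : 1 - (t * r) ^ 2 / 2 ≤ cos (t * r) := one_sub_sq_div_two_le_cos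
    have hsq : t ^ 2 ≤ (|a| + |b|) ^ 2 := sq_le_sq' (abs_le.1 ht').1 (abs_le.1 ht').2
    rw [norm_eq_abs, abs_of_nonneg (by nlinarith [cos_le_one (t * r)])]
    nlinarith [mul_le_mul_of_nonneg_right hsq (pow_nonneg hr 3)]
  have h := (convex_uIcc b a).norm_image_sub_le_of_norm_hasDerivWithin_le hderiv hbound
    left_mem_uIcc right_mem_uIcc
  rw [norm_eq_abs, norm_eq_abs] at h
  calc |(a - b) * r - (sin (a * r) - sin (b * r))|
      = |a * r - sin (a * r) - (b * r - sin (b * r))| := by congr 1; ring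
    _ ≤ _ := h

theorem setIntegral_Ioi_le_of_le_rpow {f : ℝ → ℝ} {p q A B R : ℝ} (hp : -1 < p) (hq : q < -1)
    (hR : 0 < R) (hf : AEStronglyMeasurable f (volume.restrict (Ioi 0)))
    (hf₀ : ∀ r ∈ Ioi 0, 0 ≤ f r) (hA : ∀ r ∈ Ioc 0 R, f r ≤ A * r ^ p)
    (hB : ∀ r ∈ Ioi R, f r ≤ B * r ^ q) :
    ∫ r in Ioi 0, f r ≤ A * (R ^ (p + 1) / (p + 1)) + B * (-R ^ (q + 1) / (q + 1)) := by
  have hA_int : IntegrableOn (fun r ↦ A * r ^ p) (Ioc 0 R) :=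
    ((intervalIntegrable_iff_integrableOn_Ioc_of_le hR.le).1
      (intervalIntegral.intervalIntegrable_rpow' hp)).const_mul A
  have hB_int : IntegrableOn (fun r ↦ B * r ^ q) (Ioi R) :=
    (integrableOn_Ioi_rpow_of_lt hq hR).const_mul B
  have hf_near : IntegrableOn f (Ioc 0 R) := by
    refine hA_int.mono' (hf.mono_set Ioc_subset_Ioi_self) ?_
    filter_upwards [ae_restrict_mem measurableSet_Ioc] with r hr
    rw [norm_eq_abs, abs_of_nonneg (hf₀ r hr.1)]
    exact hA r hr
  have hf_far : IntegrableOn f (Ioi R) := by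
    refine hB_int.mono' (hf.mono_set (Ioi_subset_Ioi hR.le)) ?_
    filter_upwards [ae_restrict_mem measurableSet_Ioi] with r hr
    rw [norm_eq_abs, abs_of_nonneg (hf₀ r (hR.trans hr))]
    exact hB r hr
  rw [← Ioc_union_Ioi_eq_Ioi hR.le,
    setIntegral_union Ioc_disjoint_Ioi_same measurableSet_Ioi hf_near hf_far]
  gcongr
  · calc ∫ r in Ioc 0 R, f r ≤ ∫ r in Ioc 0 R, A * r ^ p :=
          setIntegral_mono_on hf_near hA_int measurableSet_Ioc hA
      _ = A * (R ^ (p + 1) / (p + 1)) := by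
        rw [integral_const_mul, ← intervalIntegral.integral_of_le hR.le,
          integral_rpow (Or.inl hp), zero_rpow (by linarith), sub_zero]
  · calc ∫ r in Ioi R, f r ≤ ∫ r in Ioi R, B * r ^ q :=
          setIntegral_mono_on hf_far hB_int measurableSet_Ioi hB
      _ = B * (-R ^ (q + 1) / (q + 1)) := by
        rw [integral_const_mul, integral_Ioi_rpow_of_lt hq hR]

lemma rpow_natCast_div_rpow_one_add {r : ℝ} (hr : 0 < r) (n : ℕ) (α : ℝ) :
    r ^ n / r ^ (1 + α) = r ^ (n - 1 - α) := by
  rw [sub_sub, rpow_sub hr, rpow_natCast]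

section Integrand

variable (a b : ℝ) {α r : ℝ}

lemma abs_sub_sin_sub_sin_div_rpow_le_rpow_two_sub (hr : 0 < r) :
    |(a - b) * r - (sin (a * r) - sin (b * r))| / r ^ (1 + α)
      ≤ (|a| + |b|) ^ 2 / 2 * |a - b| * r ^ (2 - α) :=
  calc _ ≤ (|a| + |b|) ^ 2 * r ^ 3 / 2 * |a - b| / r ^ (1 + α) := by
        gcongr; exact abs_sub_sin_sub_sin_le_cube a b hr.le
    _ = (|a| + |b|) ^ 2 / 2 * |a - b| * (r ^ 3 / r ^ (1 + α)) := by ring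
    _ = _ := by rw [rpow_natCast_div_rpow_one_add hr]; norm_num

lemma abs_sub_sin_sub_sin_div_rpow_le_rpow_neg (hr : 0 < r) :
    |(a - b) * r - (sin (a * r) - sin (b * r))| / r ^ (1 + α) ≤ 2 * |a - b| * r ^ (-α) :=
  calc _ ≤ 2 * r * |a - b| / r ^ (1 + α) := by
        gcongr; exact abs_sub_sin_sub_sin_le_two_mul a b hr.le
    _ = 2 * |a - b| * (r ^ 1 / r ^ (1 + α)) := by ring
    _ = _ := by rw [rpow_natCast_div_rpow_one_add hr]; norm_num

end Integrand

lemma split_bound_at_inv_eq {M α d : ℝ} (hM : 0 < M) (hα₁ : α ≠ 1) (hα₃ : α ≠ 3) :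
    M ^ 2 / 2 * d * (M⁻¹ ^ (2 - α + 1) / (2 - α + 1)) + 2 * d * (-M⁻¹ ^ (-α + 1) / (-α + 1))
      = (1 / (2 * (3 - α)) + 2 / (α - 1)) * M ^ (α - 1) * d := by
  have h₁ : α - 1 ≠ 0 := sub_ne_zero.2 hα₁
  have h₃ : 3 - α ≠ 0 := sub_ne_zero.2 hα₃.symm
  have e₁ : M⁻¹ ^ (2 - α + 1) = M ^ (α - 1) / M ^ 2 := by
    rw [← rpow_neg_eq_inv_rpow, ← rpow_natCast, ← rpow_sub hM]; norm_num; ring_nf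
  have e₂ : M⁻¹ ^ (-α + 1) = M ^ (α - 1) := by rw [← rpow_neg_eq_inv_rpow]; ring_nf
  rw [e₁, e₂, show -α + 1 = -(α - 1) by ring, show 2 - α + 1 = 3 - α by ring]
  field_simp

/-- Lemma 2.6(iii), sine part: for `α ∈ (1,2)` there is `c_α > 0` with
`∫₀^∞ |(a−b)r − (sin(ar) − sin(br))| r^{-(1+α)} dr ≤ c_α (|a|+|b|)^{α−1} |a−b|`. -/
theorem stmt3 (α : ℝ) (hα : α ∈ Set.Ioo (1:ℝ) 2) :
    ∃ c > (0:ℝ), ∀ a b : ℝ,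
      (∫ r in Set.Ioi (0:ℝ),
          |(a - b) * r - (Real.sin (a * r) - Real.sin (b * r))| / r ^ (1 + α))
        ≤ c * (|a| + |b|) ^ (α - 1) * |a - b| := by
  obtain ⟨hα₁, hα₂⟩ := hα
  have h₁ : 0 < α - 1 := by linarith
  have h₃ : 0 < 3 - α := by linarith
  refine ⟨1 / (2 * (3 - α)) + 2 / (α - 1), by positivity, fun a b ↦ ?_⟩
  rcases (add_nonneg (abs_nonneg a) (abs_nonneg b)).eq_or_lt with hM | hM
  · obtain ⟨rfl, rfl⟩ : a = 0 ∧ b = 0 := by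
      constructor <;> apply abs_eq_zero.1 <;> linarith [abs_nonneg a, abs_nonneg b]
    simp
  calc _ ≤ (|a| + |b|) ^ 2 / 2 * |a - b| * ((|a| + |b|)⁻¹ ^ (2 - α + 1) / (2 - α + 1))
          + 2 * |a - b| * (-(|a| + |b|)⁻¹ ^ (-α + 1) / (-α + 1)) :=
        setIntegral_Ioi_le_of_le_rpow (by linarith) (by linarith) (inv_pos.2 hM)
          (by fun_prop : Measurable _).aestronglyMeasurable
          (fun r hr ↦ div_nonneg (abs_nonneg _) (rpow_nonneg (le_of_lt hr) _))
          (fun r hr ↦ abs_sub_sin_sub_sin_div_rpow_le_rpow_two_sub a b hr.1)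
          (fun r hr ↦ abs_sub_sin_sub_sin_div_rpow_le_rpow_neg a b ((inv_pos.2 hM).trans hr))
    _ = _ := split_bound_at_inv_eq hM hα₁.ne' (by linarith : α < 3).ne
end

section
/- For any β ∈ (0,1), there is a constant c_β > 0 such that for all real a, b: ∫₀^∞ |cos(ar) − cos(br)| r^{-2} dr ≤ c_β (|a|+|b|)^{1−β} |a−b|^β. -/
open MeasureTheory Real Set

/-!
Split the integral at `r₀ = 1 / (|a| + |b|)`. Near the origin,
`cos (a r) - cos (b r) = -2 sin ((a + b) r / 2) sin ((a - b) r / 2)` is at most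
`(|a| + |b|) |a - b| r² / 2`, so that piece contributes at most `|a - b| / 2`.
Beyond `r₀`, interpolating the bounds `2` and `|a - b| r` gives `2 ^ (1 - β) (|a - b| r) ^ β`,
and `r ^ (β - 2)` integrates over `(r₀, ∞)` to `(|a| + |b|) ^ (1 - β) / (1 - β)`. Finally
`|a - b| ≤ (|a| + |b|) ^ (1 - β) |a - b| ^ β` since `|a - b| ≤ |a| + |b|`.
-/

namespace Real

lemma min_le_rpow_mul_rpow {x y β : ℝ} (hx : 0 ≤ x) (hy : 0 ≤ y) (hβ₀ : 0 ≤ β)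
    (hβ₁ : β ≤ 1) : min x y ≤ x ^ (1 - β) * y ^ β := by
  have hm : 0 ≤ min x y := le_min hx hy
  calc min x y = min x y ^ (1 - β) * min x y ^ β := by
        rw [← rpow_add' hm (by norm_num), sub_add_cancel, rpow_one]
    _ ≤ x ^ (1 - β) * y ^ β := by
        gcongr
        exacts [min_le_left x y, min_le_right x y]

lemma abs_cos_sub_cos_le_mul (x y : ℝ) : |cos x - cos y| ≤ |x + y| * |x - y| / 2 := by
  have hsin (z : ℝ) : |sin (z / 2)| ≤ |z| / 2 := by
    simpa [abs_div] using abs_sin_le_abs (x := z / 2)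
  calc |cos x - cos y| = 2 * (|sin ((x + y) / 2)| * |sin ((x - y) / 2)|) := by
        rw [cos_sub_cos, abs_mul, abs_mul]; norm_num; ring
    _ ≤ 2 * (|x + y| / 2 * (|x - y| / 2)) := by gcongr <;> exact hsin _
    _ = |x + y| * |x - y| / 2 := by ring

lemma abs_cos_sub_cos_le_rpow {β : ℝ} (hβ₀ : 0 ≤ β) (hβ₁ : β ≤ 1) (x y : ℝ) :
    |cos x - cos y| ≤ 2 ^ (1 - β) * |x - y| ^ β := by
  have h₂ : |cos x - cos y| ≤ 2 :=
    (abs_sub _ _).trans (by linarith [abs_cos_le_one x, abs_cos_le_one y])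
  exact (le_min h₂ (abs_cos_sub_cos_le x y)).trans
    (min_le_rpow_mul_rpow zero_le_two (abs_nonneg _) hβ₀ hβ₁)

end Real

lemma setIntegral_Ioi_le_of_le_of_le_rpow {f : ℝ → ℝ} (hf : AEStronglyMeasurable f)
    (hf₀ : ∀ r > 0, 0 ≤ f r) {r₀ A B β : ℝ} (hr₀ : 0 < r₀) (hβ : β < 1)
    (hA : ∀ r ∈ Ioc 0 r₀, f r ≤ A) (hB : ∀ r ∈ Ioi r₀, f r ≤ B * r ^ (β - 2)) :
    ∫ r in Ioi 0, f r ≤ A * r₀ + B * (r₀ ^ (β - 1) / (1 - β)) := by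
  have hA_int : IntegrableOn (fun _ ↦ A) (Ioc 0 r₀) := integrableOn_const measure_Ioc_lt_top.ne
  have hB_int : IntegrableOn (fun r ↦ B * r ^ (β - 2)) (Ioi r₀) :=
    (integrableOn_Ioi_rpow_of_lt (by linarith) hr₀).const_mul B
  have hf_near : IntegrableOn f (Ioc 0 r₀) := by
    refine hA_int.mono' hf.restrict ((ae_restrict_iff' measurableSet_Ioc).2 (ae_of_all _ ?_))
    intro r hr
    rw [norm_of_nonneg (hf₀ r hr.1)]
    exact hA r hr
  have hf_far : IntegrableOn f (Ioi r₀) := by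
    refine hB_int.mono' hf.restrict ((ae_restrict_iff' measurableSet_Ioi).2 (ae_of_all _ ?_))
    intro r hr
    rw [norm_of_nonneg (hf₀ r (hr₀.trans hr))]
    exact hB r hr
  calc ∫ r in Ioi 0, f r = (∫ r in Ioc 0 r₀, f r) + ∫ r in Ioi r₀, f r := by
        rw [← setIntegral_union (Ioc_disjoint_Ioi le_rfl) measurableSet_Ioi hf_near hf_far,
          Ioc_union_Ioi_eq_Ioi hr₀.le]
    _ ≤ (∫ _ in Ioc 0 r₀, A) + ∫ r in Ioi r₀, B * r ^ (β - 2) :=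
        add_le_add (setIntegral_mono_on hf_near hA_int measurableSet_Ioc hA)
          (setIntegral_mono_on hf_far hB_int measurableSet_Ioi hB)
    _ = A * r₀ + B * (r₀ ^ (β - 1) / (1 - β)) := by
        rw [setIntegral_const, integral_const_mul, integral_Ioi_rpow_of_lt (by linarith) hr₀,
          Measure.real, Real.volume_Ioc, ENNReal.toReal_ofReal (by linarith)]
        rw [show β - 2 + 1 = -(1 - β) by ring, show β - 1 = -(1 - β) by ring]
        simp only [smul_eq_mul, div_neg, neg_div, neg_neg]
        ring

lemma abs_cos_mul_sub_cos_mul_div_sq_le (a b : ℝ) {r : ℝ} (hr : 0 < r) :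
    |cos (a * r) - cos (b * r)| / r ^ 2 ≤ (|a| + |b|) * |a - b| / 2 := by
  rw [div_le_iff₀ (by positivity)]
  calc |cos (a * r) - cos (b * r)| ≤ |a * r + b * r| * |a * r - b * r| / 2 :=
        abs_cos_sub_cos_le_mul _ _
    _ = |a + b| * |a - b| / 2 * r ^ 2 := by
        rw [← add_mul, ← sub_mul, abs_mul, abs_mul, abs_of_pos hr]; ring
    _ ≤ (|a| + |b|) * |a - b| / 2 * r ^ 2 := by gcongr; exact abs_add_le a b

lemma abs_cos_mul_sub_cos_mul_div_sq_le_rpow {β : ℝ} (hβ₀ : 0 ≤ β) (hβ₁ : β ≤ 1)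
    (a b : ℝ) {r : ℝ} (hr : 0 < r) :
    |cos (a * r) - cos (b * r)| / r ^ 2 ≤ 2 ^ (1 - β) * |a - b| ^ β * r ^ (β - 2) := by
  have hr2 : r ^ (β - 2) * r ^ 2 = r ^ β := by
    rw [← rpow_natCast, ← rpow_add hr]; norm_num
  have hmul : |a - b| ^ β * r ^ β = |a * r - b * r| ^ β := by
    rw [← mul_rpow (abs_nonneg _) hr.le, ← sub_mul, abs_mul, abs_of_pos hr]
  rw [div_le_iff₀ (by positivity), mul_assoc, hr2, mul_assoc, hmul]
  exact abs_cos_sub_cos_le_rpow hβ₀ hβ₁ _ _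

/-- Lemma 2.6(ii), cosine part: for `β ∈ (0,1)` there is `c_β > 0` with
`∫₀^∞ |cos(ar) − cos(br)| r^{-2} dr ≤ c_β (|a|+|b|)^{1−β} |a−b|^β`. -/
theorem stmt4 (β : ℝ) (hβ : β ∈ Set.Ioo (0:ℝ) 1) :
    ∃ c > (0:ℝ), ∀ a b : ℝ,
      (∫ r in Set.Ioi (0:ℝ), |Real.cos (a * r) - Real.cos (b * r)| / r ^ (2:ℕ))
        ≤ c * (|a| + |b|) ^ (1 - β) * |a - b| ^ β := by
  obtain ⟨hβ₀, hβ₁⟩ := hβ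
  refine ⟨1 / 2 + 2 ^ (1 - β) / (1 - β), by positivity, fun a b ↦ ?_⟩
  rcases eq_or_ne a b with rfl | hab
  · simp [zero_rpow hβ₀.ne']
  set S := |a| + |b|
  set D := |a - b|
  have hD : 0 < D := abs_pos.2 (sub_ne_zero.2 hab)
  have hDS : D ≤ S := abs_sub a b
  have hS : 0 < S := hD.trans_le hDS
  calc _ ≤ S * D / 2 * S⁻¹ + 2 ^ (1 - β) * D ^ β * (S⁻¹ ^ (β - 1) / (1 - β)) :=
        setIntegral_Ioi_le_of_le_of_le_rpow (by fun_prop : Measurable _).aestronglyMeasurable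
          (fun r _ ↦ by positivity) (inv_pos.2 hS) hβ₁
          (fun r hr ↦ abs_cos_mul_sub_cos_mul_div_sq_le a b hr.1)
          (fun r hr ↦ abs_cos_mul_sub_cos_mul_div_sq_le_rpow hβ₀.le hβ₁.le a b
            ((inv_pos.2 hS).trans hr))
    _ = min S D / 2 + 2 ^ (1 - β) / (1 - β) * S ^ (1 - β) * D ^ β := by
        rw [min_eq_right hDS, inv_rpow hS.le, ← rpow_neg hS.le, neg_sub]
        field_simp
    _ ≤ S ^ (1 - β) * D ^ β / 2 + 2 ^ (1 - β) / (1 - β) * S ^ (1 - β) * D ^ β := by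
        gcongr
        exact min_le_rpow_mul_rpow hS.le hD.le hβ₀.le hβ₁.le
    _ = (1 / 2 + 2 ^ (1 - β) / (1 - β)) * S ^ (1 - β) * D ^ β := by ring
end

section
/- For any β ∈ (0,1), there is a constant c_β > 0 such that for all real a, b with a ≠ b: ∫₀^∞ |(a−b)·r·1_{r ≤ |a−b|^{-1}} − (sin(ar) − sin(br))| r^{-2} dr ≤ c_β (|a|+|b|)^{1−β} |a−b|^β. -/
/-!
Write `δ = |a - b|` and `s = |a| + |b|`. For `r ≤ 1/δ` the numerator is at most
`2 min(s³r³, δr)`, by `|x - sin x| ≤ |x|³/6` and since `sin` is 1-Lipschitz; interpolating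
`min(x, y) ≤ x^θ y^(1-θ)` with `θ = (1 - β)/3` gives the majorant `2 s^(1-β) δ^(1-θ) r^(2θ-1)`,
integrable at `0`. For `r > 1/δ` the integrand is at most `2/r² ≤ 2 δ^β r^(β-2)`, since `δr > 1`.
Integrating the two power majorants yields the bound with `c_β = 5/(1 - β)`.
-/

open MeasureTheory Real Set

theorem integrableOn_Ioc_zero_rpow {T p : ℝ} (hT : 0 < T) (hp : -1 < p) :
    IntegrableOn (fun r : ℝ => r ^ p) (Ioc 0 T) :=
  (intervalIntegrable_iff_integrableOn_Ioc_of_le hT.le).1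
    (intervalIntegral.intervalIntegrable_rpow' hp)

theorem integral_Ioc_zero_rpow {T p : ℝ} (hT : 0 < T) (hp : -1 < p) :
    ∫ r in Ioc 0 T, r ^ p = T ^ (p + 1) / (p + 1) := by
  rw [← intervalIntegral.integral_of_le hT.le, integral_rpow (Or.inl hp),
    zero_rpow (by linarith), sub_zero]

theorem setIntegral_Ioi_zero_le_of_le_rpow {g : ℝ → ℝ} {T p q A B : ℝ} (hT : 0 < T)
    (hp : -1 < p) (hq : q < -1)
    (hg : ∀ r ∈ Ioi 0, 0 ≤ g r) (hsmall : ∀ r ∈ Ioc 0 T, g r ≤ A * r ^ p)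
    (hlarge : ∀ r ∈ Ioi T, g r ≤ B * r ^ q) :
    ∫ r in Ioi 0, g r ≤ A * (T ^ (p + 1) / (p + 1)) + B * (-T ^ (q + 1) / (q + 1)) := by
  set h : ℝ → ℝ := fun r => if r ≤ T then A * r ^ p else B * r ^ q
  have hsmall_eq : EqOn (fun r => A * r ^ p) h (Ioc 0 T) := fun r hr => (if_pos hr.2).symm
  have hlarge_eq : EqOn (fun r => B * r ^ q) h (Ioi T) := fun r hr =>
    (if_neg (not_le.2 (mem_Ioi.1 hr))).symm
  have hint_small : IntegrableOn h (Ioc 0 T) :=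
    IntegrableOn.congr_fun (Integrable.const_mul (integrableOn_Ioc_zero_rpow hT hp) A) hsmall_eq
      measurableSet_Ioc
  have hint_large : IntegrableOn h (Ioi T) :=
    IntegrableOn.congr_fun (Integrable.const_mul (integrableOn_Ioi_rpow_of_lt hq hT) B) hlarge_eq
      measurableSet_Ioi
  have hsplit : Ioc 0 T ∪ Ioi T = Ioi 0 := Ioc_union_Ioi_eq_Ioi hT.le
  have hg_le_h : ∀ r ∈ Ioi 0, g r ≤ h r := by
    intro r hr
    rcases le_or_gt r T with hrT | hrT
    · exact (hsmall r ⟨hr, hrT⟩).trans_eq (hsmall_eq ⟨hr, hrT⟩)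
    · exact (hlarge r hrT).trans_eq (hlarge_eq hrT)
  calc ∫ r in Ioi 0, g r ≤ ∫ r in Ioi 0, h r :=
        integral_mono_of_nonneg ((ae_restrict_iff' measurableSet_Ioi).2 (.of_forall hg))
          (hsplit ▸ hint_small.union hint_large)
          ((ae_restrict_iff' measurableSet_Ioi).2 (.of_forall hg_le_h))
    _ = (∫ r in Ioc 0 T, A * r ^ p) + ∫ r in Ioi T, B * r ^ q := by
        rw [← hsplit, setIntegral_union (Ioc_disjoint_Ioi le_rfl) measurableSet_Ioi hint_small
          hint_large, setIntegral_congr_fun measurableSet_Ioc hsmall_eq.symm,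
          setIntegral_congr_fun measurableSet_Ioi hlarge_eq.symm]
    _ = _ := by
        rw [integral_const_mul, integral_const_mul, integral_Ioc_zero_rpow hT hp,
          integral_Ioi_rpow_of_lt hq hT]

theorem min_le_rpow_mul_rpow {x y θ : ℝ} (hx : 0 ≤ x) (hy : 0 ≤ y) (hθ0 : 0 ≤ θ) (hθ1 : θ ≤ 1) :
    min x y ≤ x ^ θ * y ^ (1 - θ) := by
  have hθ1' : 0 ≤ 1 - θ := by linarith
  calc min x y = min x y ^ θ * min x y ^ (1 - θ) := by
        rw [← rpow_add_of_nonneg (le_min hx hy) hθ0 hθ1', add_sub_cancel, rpow_one]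
    _ ≤ x ^ θ * y ^ (1 - θ) := by gcongr <;> simp

theorem abs_mul_sub_sin_sub_sin_le_min (a b : ℝ) {r : ℝ} (hr : 0 ≤ r) :
    |(a - b) * r - (sin (a * r) - sin (b * r))|
      ≤ 2 * min ((|a| + |b|) ^ 3 * r ^ 3) (|a - b| * r) := by
  rw [mul_min_of_nonneg _ _ zero_le_two]
  refine le_min ?_ ?_
  · have hcube : |a| ^ 3 + |b| ^ 3 ≤ (|a| + |b|) ^ 3 :=
      pow_add_pow_le (abs_nonneg a) (abs_nonneg b) three_ne_zero
    calc |(a - b) * r - (sin (a * r) - sin (b * r))|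
        = |(a * r - sin (a * r)) - (b * r - sin (b * r))| := by ring_nf
      _ ≤ |a * r| ^ 3 / 6 + |b * r| ^ 3 / 6 :=
        (abs_sub _ _).trans (add_le_add (abs_sub_sin_le _) (abs_sub_sin_le _))
      _ = (|a| ^ 3 + |b| ^ 3) * r ^ 3 / 6 := by
        rw [abs_mul, abs_mul, abs_of_nonneg hr]; ring
      _ ≤ 2 * ((|a| + |b|) ^ 3 * r ^ 3) := by
        have := mul_le_mul_of_nonneg_right hcube (pow_nonneg hr 3)
        have : 0 ≤ (|a| + |b|) ^ 3 * r ^ 3 := by positivity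
        linarith
  · calc |(a - b) * r - (sin (a * r) - sin (b * r))|
        ≤ |(a - b) * r| + |a * r - b * r| := (abs_sub _ _).trans (add_le_add le_rfl
          (abs_sin_sub_sin_le _ _))
      _ = 2 * (|a - b| * r) := by rw [← sub_mul, abs_mul, abs_of_nonneg hr]; ring

noncomputable def sinDiffIntegrand (a b r : ℝ) : ℝ :=
  |(if r ≤ |a - b|⁻¹ then (a - b) * r else 0) - (sin (a * r) - sin (b * r))| / r ^ 2

theorem sinDiffIntegrand_le_of_le_inv (a b : ℝ) {r θ : ℝ} (hr : 0 < r) (hrT : r ≤ |a - b|⁻¹)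
    (hθ0 : 0 ≤ θ) (hθ1 : θ ≤ 1) :
    sinDiffIntegrand a b r ≤ 2 * (|a| + |b|) ^ (3 * θ) * |a - b| ^ (1 - θ) * r ^ (2 * θ - 1) := by
  have hs : 0 ≤ |a| + |b| := by positivity
  have hδ : 0 ≤ |a - b| := abs_nonneg _
  have hpow : ((|a| + |b|) ^ 3 * r ^ 3) ^ θ * (|a - b| * r) ^ (1 - θ)
      = (|a| + |b|) ^ (3 * θ) * |a - b| ^ (1 - θ) * r ^ (2 * θ + 1) := by
    rw [← mul_pow, ← rpow_natCast, ← rpow_mul (by positivity), mul_rpow hs hr.le,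
      mul_rpow hδ hr.le, show 2 * θ + 1 = (3 : ℕ) * θ + (1 - θ) by push_cast; ring,
      rpow_add hr, Nat.cast_ofNat]
    ring
  rw [sinDiffIntegrand, if_pos hrT]
  calc _ ≤ 2 * min ((|a| + |b|) ^ 3 * r ^ 3) (|a - b| * r) / r ^ 2 := by
        gcongr; exact abs_mul_sub_sin_sub_sin_le_min a b hr.le
    _ ≤ 2 * ((|a| + |b|) ^ (3 * θ) * |a - b| ^ (1 - θ) * r ^ (2 * θ + 1)) / r ^ 2 := by
        rw [← hpow]; gcongr; exact min_le_rpow_mul_rpow (by positivity) (by positivity) hθ0 hθ1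
    _ = _ := by
        rw [show 2 * θ - 1 = 2 * θ + 1 - (2 : ℕ) by push_cast; ring, rpow_sub_natCast hr.ne']
        ring

theorem sinDiffIntegrand_le_of_inv_lt {a b r β : ℝ} (hab : a ≠ b) (hrT : |a - b|⁻¹ < r)
    (hβ : 0 ≤ β) :
    sinDiffIntegrand a b r ≤ 2 * |a - b| ^ β * r ^ (β - 2) := by
  have hδ : 0 < |a - b| := abs_pos.2 (sub_ne_zero.2 hab)
  have hr : 0 < r := (inv_pos.2 hδ).trans hrT
  have hsin : |sin (a * r) - sin (b * r)| ≤ 2 := by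
    linarith [abs_sub (sin (a * r)) (sin (b * r)), abs_sin_le_one (a * r), abs_sin_le_one (b * r)]
  have hδr : 1 ≤ (|a - b| * r) ^ β :=
    one_le_rpow ((inv_lt_iff_one_lt_mul₀' hδ).1 hrT).le hβ
  rw [sinDiffIntegrand, if_neg hrT.not_ge, zero_sub, abs_neg,
    show β - 2 = β - (2 : ℕ) by norm_num, rpow_sub_natCast hr.ne', ← mul_div_assoc, mul_assoc,
    ← mul_rpow hδ.le hr.le]
  gcongr
  linarith

theorem integral_sinDiffIntegrand_le {a b β : ℝ} (hab : a ≠ b) (hβ0 : 0 < β) (hβ1 : β < 1) :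
    ∫ r in Ioi 0, sinDiffIntegrand a b r
      ≤ 5 / (1 - β) * (|a| + |b|) ^ (1 - β) * |a - b| ^ β := by
  have hδ : 0 < |a - b| := abs_pos.2 (sub_ne_zero.2 hab)
  set θ := (1 - β) / 3 with hθ
  have hsmall : |a - b| ^ (1 - θ) * |a - b|⁻¹ ^ (2 * θ - 1 + 1) = |a - b| ^ β := by
    rw [inv_rpow hδ.le, ← rpow_neg hδ.le, ← rpow_add hδ]; congr 1; ring
  have hlarge : |a - b|⁻¹ ^ (β - 2 + 1) = |a - b| ^ (1 - β) := by
    rw [inv_rpow hδ.le, ← rpow_neg hδ.le]; congr 1; ring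
  have hδs : |a - b| ^ (1 - β) ≤ (|a| + |b|) ^ (1 - β) :=
    rpow_le_rpow hδ.le (abs_sub a b) (by linarith)
  have h1β : 1 - β ≠ 0 := by linarith
  have hq : β - 2 + 1 ≠ 0 := by linarith
  calc _ ≤ _ := setIntegral_Ioi_zero_le_of_le_rpow (inv_pos.2 hδ)
          (show -1 < 2 * θ - 1 by linarith) (show β - 2 < -1 by linarith)
          (fun r _ => by unfold sinDiffIntegrand; positivity)
          (fun r hr => sinDiffIntegrand_le_of_le_inv a b hr.1 hr.2 (by linarith) (by linarith))
          (fun r hr => sinDiffIntegrand_le_of_inv_lt hab hr hβ0.le)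
    _ = 3 / (1 - β) * (|a| + |b|) ^ (1 - β) * |a - b| ^ β
          + 2 / (1 - β) * |a - b| ^ (1 - β) * |a - b| ^ β := by
      rw [show 3 * θ = 1 - β by ring, hlarge, ← hsmall, hθ]
      field_simp
      ring
    _ ≤ 3 / (1 - β) * (|a| + |b|) ^ (1 - β) * |a - b| ^ β
          + 2 / (1 - β) * (|a| + |b|) ^ (1 - β) * |a - b| ^ β := by
      gcongr
    _ = 5 / (1 - β) * (|a| + |b|) ^ (1 - β) * |a - b| ^ β := by ring

/-- Lemma 2.6(ii), sine part: for `β ∈ (0,1)` there is `c_β > 0` such that for `a ≠ b`,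
`∫₀^∞ |(a−b) r 1_{r ≤ |a−b|⁻¹} − (sin(ar) − sin(br))| r^{-2} dr
  ≤ c_β (|a|+|b|)^{1−β} |a−b|^β`. -/
theorem stmt5 (β : ℝ) (hβ : β ∈ Set.Ioo (0:ℝ) 1) :
    ∃ c > (0:ℝ), ∀ a b : ℝ, a ≠ b →
      (∫ r in Set.Ioi (0:ℝ),
          |(if r ≤ |a - b|⁻¹ then (a - b) * r else 0)
              - (Real.sin (a * r) - Real.sin (b * r))| / r ^ (2:ℕ))
        ≤ c * (|a| + |b|) ^ (1 - β) * |a - b| ^ β :=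
  ⟨5 / (1 - β), div_pos (by norm_num) (by linarith [hβ.2]),
    fun _ _ hab => integral_sinDiffIntegrand_le hab hβ.1 hβ.2⟩
end

section
/- Let ν^{(α)} be an α-stable Lévy measure on ℝ^d of the form ν^{(α)}(Γ) = ∫₀^∞ ∫_{S^{d−1}} 1_Γ(rθ) Σ(dθ) r^{-(1+α)} dr with α ∈ (0,2) and Σ a finite measure on the unit sphere. Suppose ν is a measure on ℝ^d with ν ≥ ν^{(α)}, and σ is an invertible d×d real matrix. Then for all ξ ∈ ℝ^d, ∫_{ℝ^d} (1 − cos(ξ·σy)) ν(dy) ≥ c_α · (inf_{|θ|=1} |σ*θ|^α) · (inf_{|θ₀|=1} ∫_{S^{d−1}} |θ₀·θ|^α Σ(dθ)) · |ξ|^α, where c_α = ∫₀^∞ (1−cos r) r^{-(1+α)} dr ∈ (0,∞). -/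
/-!
In polar coordinates, with `⟪ξ, σ y⟫ = ⟪σ* ξ, y⟫`, the radial integral along the ray through `θ`
is `∫₀^∞ (1 - cos (t r)) r^{-(1+α)} dr = c_α |t|^α` with `t = ⟪σ* ξ, θ⟫` (substitute `u = |t| r`).
Hence `∫ (1 - cos ⟪ξ, σ y⟫) ν^{(α)}(dy) = c_α ∫ |⟪σ* ξ, θ⟫|^α Σ(dθ)`, and the two infima bound this
from below because `x ↦ ‖σ* x‖^α` and `x ↦ ∫ |⟪x, θ⟫|^α Σ(dθ)` are positively homogeneous of
degree `α`. Finally `ν ≥ ν^{(α)}`.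
-/

open MeasureTheory Real Set RealInnerProductSpace
open scoped ENNReal

section StableConstant

variable {α : ℝ}

theorem integrableOn_one_sub_cos_div_rpow (hα0 : 0 < α) (hα2 : α < 2) :
    IntegrableOn (fun r => (1 - cos r) / r ^ (1 + α)) (Ioi 0) := by
  have hcont : ContinuousOn (fun r : ℝ => (1 - cos r) / r ^ (1 + α)) (Ioi 0) :=
    (by fun_prop : Continuous fun r => 1 - cos r).continuousOn.div
      (continuousOn_id.rpow_const fun x hx => Or.inl (ne_of_gt hx))
      fun x hx => (rpow_pos_of_pos hx _).ne'
  have hnorm : ∀ r : ℝ, 0 < r → ‖(1 - cos r) / r ^ (1 + α)‖ = (1 - cos r) / r ^ (1 + α) :=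
    fun r hr => norm_of_nonneg (div_nonneg (by linarith [cos_le_one r]) (rpow_pos_of_pos hr _).le)
  -- `1 - cos r ≤ r ^ 2 / 2` near the origin and `1 - cos r ≤ 2` at infinity
  have hnear : IntegrableOn (fun r => (1 - cos r) / r ^ (1 + α)) (Ioc 0 1) := by
    rw [integrableOn_Ioc_iff_integrableOn_Ioo]
    refine Integrable.mono' ((((intervalIntegral.integrableOn_Ioo_rpow_iff one_pos).2
      (by linarith : -1 < 1 - α))).div_const 2)
      ((hcont.mono Ioo_subset_Ioi_self).aestronglyMeasurable measurableSet_Ioo) ?_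
    filter_upwards [ae_restrict_mem measurableSet_Ioo] with r hr
    rw [hnorm r hr.1, div_le_iff₀ (rpow_pos_of_pos hr.1 _), div_mul_eq_mul_div, ← rpow_add hr.1,
      show 1 - α + (1 + α) = ((2 : ℕ) : ℝ) by norm_num, rpow_natCast]
    linarith [one_sub_sq_div_two_le_cos (x := r)]
  have hfar : IntegrableOn (fun r => (1 - cos r) / r ^ (1 + α)) (Ioi 1) := by
    refine Integrable.mono' (((integrableOn_Ioi_rpow_iff one_pos).2
      (by linarith : -(1 + α) < -1)).const_mul 2)
      ((hcont.mono (Ioi_subset_Ioi zero_le_one)).aestronglyMeasurable measurableSet_Ioi) ?_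
    filter_upwards [ae_restrict_mem measurableSet_Ioi] with r hr
    have hr0 : 0 < r := one_pos.trans hr
    rw [hnorm r hr0, div_le_iff₀ (rpow_pos_of_pos hr0 _), mul_assoc, ← rpow_add hr0,
      neg_add_cancel, rpow_zero, mul_one]
    linarith [neg_one_le_cos r]
  rw [← Ioc_union_Ioi_eq_Ioi zero_le_one]
  exact hnear.union hfar

theorem integral_one_sub_cos_div_rpow_pos (hα0 : 0 < α) (hα2 : α < 2) :
    0 < ∫ r in Ioi 0, (1 - cos r) / r ^ (1 + α) := by
  rw [setIntegral_pos_iff_support_of_nonneg_ae _ (integrableOn_one_sub_cos_div_rpow hα0 hα2)]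
  · have hsub : Ioo 0 π ⊆ Function.support (fun r => (1 - cos r) / r ^ (1 + α)) ∩ Ioi 0 :=
      fun r hr => ⟨(div_pos
        (by linarith [cos_zero ▸ cos_lt_cos_of_nonneg_of_le_pi le_rfl hr.2.le hr.1])
        (rpow_pos_of_pos hr.1 _)).ne', hr.1⟩
    exact (by simp [pi_pos] : (0 : ℝ≥0∞) < volume (Ioo 0 π)).trans_le (measure_mono hsub)
  · filter_upwards [ae_restrict_mem measurableSet_Ioi] with r hr
    exact div_nonneg (by linarith [cos_le_one r]) (rpow_pos_of_pos hr _).le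

theorem one_sub_cos_mul_div_rpow_eqOn {c : ℝ} (hc : 0 < c) :
    EqOn (fun r => (1 - cos (c * r)) / r ^ (1 + α))
      (fun r => c ^ (1 + α) * ((1 - cos (c * r)) / (c * r) ^ (1 + α))) (Ioi 0) := by
  intro r hr
  have hcα : 0 < c ^ (1 + α) := rpow_pos_of_pos hc _
  simp only [mul_rpow hc.le (le_of_lt hr)]
  field_simp

theorem integral_one_sub_cos_mul_div_rpow {c : ℝ} (hc : 0 < c) :
    ∫ r in Ioi 0, (1 - cos (c * r)) / r ^ (1 + α)
      = c ^ α * ∫ r in Ioi 0, (1 - cos r) / r ^ (1 + α) := by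
  rw [setIntegral_congr_fun measurableSet_Ioi (one_sub_cos_mul_div_rpow_eqOn hc),
    integral_const_mul, integral_comp_mul_left_Ioi (fun r => (1 - cos r) / r ^ (1 + α)) 0 hc,
    mul_zero, smul_eq_mul, ← mul_assoc, ← rpow_neg_one, ← rpow_add hc]
  ring_nf

theorem integrableOn_one_sub_cos_mul_div_rpow (hα0 : 0 < α) (hα2 : α < 2) {c : ℝ} (hc : 0 < c) :
    IntegrableOn (fun r => (1 - cos (c * r)) / r ^ (1 + α)) (Ioi 0) := by
  refine IntegrableOn.congr_fun ?_ (one_sub_cos_mul_div_rpow_eqOn hc).symm measurableSet_Ioi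
  refine Integrable.const_mul ?_ _
  exact (integrableOn_Ioi_comp_mul_left_iff (fun r => (1 - cos r) / r ^ (1 + α)) 0 hc).2
    (by simpa using integrableOn_one_sub_cos_div_rpow hα0 hα2)

theorem lintegral_one_sub_cos_mul_mul_rpow (hα0 : 0 < α) (hα2 : α < 2) (t : ℝ) :
    ∫⁻ r in Ioi 0, ENNReal.ofReal (1 - cos (t * r)) * ENNReal.ofReal (r ^ (-(1 + α)))
      = ENNReal.ofReal ((∫ r in Ioi 0, (1 - cos r) / r ^ (1 + α)) * |t| ^ α) := by
  rcases eq_or_ne t 0 with rfl | ht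
  · simp [zero_rpow hα0.ne']
  have hc : 0 < |t| := abs_pos.2 ht
  have hcos : ∀ r, 0 < r → cos (t * r) = cos (|t| * r) := fun r hr => by
    rw [← cos_abs, abs_mul, abs_of_pos hr]
  rw [mul_comm, ← integral_one_sub_cos_mul_div_rpow hc, ofReal_integral_eq_lintegral_ofReal
    (integrableOn_one_sub_cos_mul_div_rpow hα0 hα2 hc)]
  · refine setLIntegral_congr_fun measurableSet_Ioi fun r hr => ?_
    rw [hcos r hr, rpow_neg (le_of_lt hr), div_eq_mul_inv,
      ENNReal.ofReal_mul (by linarith [cos_le_one (|t| * r)])]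
  · filter_upwards [ae_restrict_mem measurableSet_Ioi] with r hr
    exact div_nonneg (by linarith [cos_le_one (|t| * r)]) (rpow_pos_of_pos hr _).le

end StableConstant

section Polar

variable {E : Type*} [MeasurableSpace E] [SMul ℝ E] [MeasurableSMul₂ ℝ E]

theorem eq_map_smul_prod_withDensity (ρ : Measure ℝ) {w : ℝ → ℝ≥0∞} (hw : Measurable w)
    (S : Measure E) [SFinite S] (μ : Measure E)
    (hμ : ∀ Γ : Set E, MeasurableSet Γ →
      μ Γ = ∫⁻ r, (∫⁻ θ, Γ.indicator (fun _ => (1 : ℝ≥0∞)) (r • θ) ∂S) * w r ∂ρ) :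
    μ = ((ρ.withDensity w).prod S).map (fun p => p.1 • p.2) := by
  have hsmul : Measurable fun p : ℝ × E => p.1 • p.2 := measurable_smul
  ext Γ hΓ
  have hslice : ∀ r : ℝ, ∫⁻ θ, Γ.indicator (fun _ => (1 : ℝ≥0∞)) (r • θ) ∂S
      = S (Prod.mk r ⁻¹' ((fun p : ℝ × E => p.1 • p.2) ⁻¹' Γ)) := fun r => by
    rw [← lintegral_indicator_one (measurable_prodMk_left (hsmul hΓ))]
    rfl
  rw [Measure.map_apply hsmul hΓ, Measure.prod_apply (hsmul hΓ), hμ Γ hΓ,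
    lintegral_withDensity_eq_lintegral_mul _ hw (measurable_measure_prodMk_left (hsmul hΓ))]
  simp only [hslice, Pi.mul_apply, mul_comm]

theorem lintegral_eq_lintegral_lintegral_smul (ρ : Measure ℝ) [SFinite ρ] {w : ℝ → ℝ≥0∞}
    (hw : Measurable w) (S : Measure E) [SFinite S] (μ : Measure E)
    (hμ : ∀ Γ : Set E, MeasurableSet Γ →
      μ Γ = ∫⁻ r, (∫⁻ θ, Γ.indicator (fun _ => (1 : ℝ≥0∞)) (r • θ) ∂S) * w r ∂ρ)
    {f : E → ℝ≥0∞} (hf : Measurable f) :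
    ∫⁻ y, f y ∂μ = ∫⁻ θ, ∫⁻ r, f (r • θ) * w r ∂ρ ∂S := by
  have hsmul : Measurable fun p : ℝ × E => p.1 • p.2 := measurable_smul
  rw [eq_map_smul_prod_withDensity ρ hw S μ hμ, lintegral_map hf hsmul,
    lintegral_prod_symm' (fun p : ℝ × E => f (p.1 • p.2)) (hf.comp hsmul)]
  refine lintegral_congr fun θ => ?_
  rw [lintegral_withDensity_eq_lintegral_mul _ hw
    (show Measurable fun r : ℝ => f (r • θ) from hf.comp (measurable_id.smul_const θ))]
  simp only [Pi.mul_apply, mul_comm]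

end Polar

section Sphere

variable {E : Type*} [NormedAddCommGroup E] [NormedSpace ℝ E]

theorem iInf_sphere_mul_rpow_norm_le {f : E → ℝ} {α : ℝ} (hα : α ≠ 0) (hf0 : ∀ x, 0 ≤ f x)
    (hf : ∀ c : ℝ, 0 ≤ c → ∀ x, f (c • x) = c ^ α * f x) (x : E) :
    (⨅ θ : Metric.sphere (0 : E) 1, f θ) * ‖x‖ ^ α ≤ f x := by
  rcases eq_or_ne x 0 with rfl | hx
  · simpa [zero_rpow hα] using hf0 0
  have hu : ‖x‖⁻¹ • x ∈ Metric.sphere (0 : E) 1 := by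
    rw [mem_sphere_zero_iff_norm, norm_smul, norm_inv, norm_norm,
      inv_mul_cancel₀ (norm_ne_zero_iff.2 hx)]
  have hfx : f x = ‖x‖ ^ α * f (‖x‖⁻¹ • x) := by
    rw [← hf _ (norm_nonneg x), smul_inv_smul₀ (norm_ne_zero_iff.2 hx)]
  rw [hfx, mul_comm]
  have hbdd : BddBelow (range fun θ : Metric.sphere (0 : E) 1 => f θ) :=
    ⟨0, by rintro _ ⟨θ, rfl⟩; exact hf0 θ⟩
  exact mul_le_mul_of_nonneg_left (ciInf_le hbdd ⟨_, hu⟩) (rpow_nonneg (norm_nonneg x) α)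

theorem iInf_sphere_norm_rpow_mul_le {F : Type*} [NormedAddCommGroup F] [NormedSpace ℝ F]
    (T : E →L[ℝ] F) {α : ℝ} (hα : α ≠ 0) (x : E) :
    (⨅ θ : Metric.sphere (0 : E) 1, ‖T θ‖ ^ α) * ‖x‖ ^ α ≤ ‖T x‖ ^ α :=
  iInf_sphere_mul_rpow_norm_le hα (fun _ => rpow_nonneg (norm_nonneg _) _) (fun c hc x => by
    rw [map_smul, norm_smul, norm_of_nonneg hc, mul_rpow hc (norm_nonneg _)]) x

end Sphere

theorem iInf_sphere_integral_abs_inner_rpow_mul_le {E : Type*} [NormedAddCommGroup E]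
    [InnerProductSpace ℝ E] [MeasurableSpace E] (S : Measure E) {α : ℝ} (hα : α ≠ 0) (x : E) :
    (⨅ θ₀ : Metric.sphere (0 : E) 1, ∫ θ, |⟪(θ₀ : E), θ⟫| ^ α ∂S) * ‖x‖ ^ α
      ≤ ∫ θ, |⟪x, θ⟫| ^ α ∂S :=
  iInf_sphere_mul_rpow_norm_le hα (fun _ => integral_nonneg fun _ => rpow_nonneg (abs_nonneg _) _)
    (fun c hc x => by
      simp only [real_inner_smul_left, abs_mul, abs_of_nonneg hc, mul_rpow hc (abs_nonneg _),
        integral_const_mul]) x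

theorem ofReal_integral_le_lintegral_ofReal {X : Type*} [MeasurableSpace X] {μ : Measure X}
    {f : X → ℝ} (hf : ∀ x, 0 ≤ f x) :
    ENNReal.ofReal (∫ x, f x ∂μ) ≤ ∫⁻ x, ENNReal.ofReal (f x) ∂μ :=
  (ofReal_le_enorm _).trans <| (enorm_integral_le_lintegral_enorm f).trans_eq <|
    lintegral_congr fun x => Real.enorm_eq_ofReal (hf x)

theorem stmt8_general (d : ℕ) (α : ℝ) (hα : α ∈ Set.Ioo (0:ℝ) 2)
    (S : Measure (EuclideanSpace ℝ (Fin d))) [IsFiniteMeasure S]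
    (να ν : Measure (EuclideanSpace ℝ (Fin d)))
    (hνα : ∀ Γ : Set (EuclideanSpace ℝ (Fin d)), MeasurableSet Γ →
      να Γ = ∫⁻ r in Set.Ioi (0:ℝ),
        (∫⁻ θ, Γ.indicator (fun _ => (1:ℝ≥0∞)) (r • θ) ∂S) * ENNReal.ofReal (r ^ (-(1+α))))
    (hle : να ≤ ν)
    (σ : EuclideanSpace ℝ (Fin d) ≃L[ℝ] EuclideanSpace ℝ (Fin d)) :
    IntegrableOn (fun r => (1 - Real.cos r) / r ^ (1 + α)) (Set.Ioi (0:ℝ)) ∧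
    (0 < ∫ r in Set.Ioi (0:ℝ), (1 - Real.cos r) / r ^ (1 + α)) ∧
    ∀ ξ : EuclideanSpace ℝ (Fin d),
      ENNReal.ofReal ((∫ r in Set.Ioi (0:ℝ), (1 - Real.cos r) / r ^ (1 + α)) *
          ((⨅ θ : Metric.sphere (0 : EuclideanSpace ℝ (Fin d)) 1,
              ‖ContinuousLinearMap.adjoint σ.toContinuousLinearMap θ‖ ^ α) *
            ((⨅ θ₀ : Metric.sphere (0 : EuclideanSpace ℝ (Fin d)) 1,
                ∫ θ, |⟪(θ₀ : EuclideanSpace ℝ (Fin d)), θ⟫| ^ α ∂S) * ‖ξ‖ ^ α)))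
        ≤ ∫⁻ y, ENNReal.ofReal (1 - Real.cos ⟪ξ, σ y⟫) ∂ν := by
  obtain ⟨hα0, hα2⟩ := hα
  have hcα := integral_one_sub_cos_div_rpow_pos hα0 hα2
  refine ⟨integrableOn_one_sub_cos_div_rpow hα0 hα2, hcα, fun ξ => ?_⟩
  set σstar := ContinuousLinearMap.adjoint σ.toContinuousLinearMap
  have hσstar : ∀ y, ⟪ξ, σ y⟫ = ⟪σstar ξ, y⟫ := fun y =>
    (ContinuousLinearMap.adjoint_inner_left σ.toContinuousLinearMap y ξ).symm
  have hσ := iInf_sphere_norm_rpow_mul_le σstar hα0.ne' ξ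
  have hS := iInf_sphere_integral_abs_inner_rpow_mul_le S hα0.ne' (σstar ξ)
  have hS0 : 0 ≤ ⨅ θ₀ : Metric.sphere (0 : EuclideanSpace ℝ (Fin d)) 1,
      ∫ θ, |⟪(θ₀ : EuclideanSpace ℝ (Fin d)), θ⟫| ^ α ∂S :=
    Real.iInf_nonneg fun _ => integral_nonneg fun _ => rpow_nonneg (abs_nonneg _) _
  have hf : Measurable fun y => ENNReal.ofReal (1 - cos ⟪ξ, σ y⟫) := by fun_prop
  calc _ ≤ ENNReal.ofReal (∫ θ, (∫ r in Ioi 0, (1 - cos r) / r ^ (1 + α)) *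
          |⟪σstar ξ, θ⟫| ^ α ∂S) := by
        rw [integral_const_mul]
        gcongr
        nlinarith [mul_le_mul_of_nonneg_left hσ hS0]
    _ ≤ ∫⁻ θ, ENNReal.ofReal ((∫ r in Ioi 0, (1 - cos r) / r ^ (1 + α)) *
          |⟪σstar ξ, θ⟫| ^ α) ∂S :=
        ofReal_integral_le_lintegral_ofReal fun θ => by positivity
    _ = ∫⁻ θ, (∫⁻ r in Ioi 0, ENNReal.ofReal (1 - cos ⟪ξ, σ (r • θ)⟫) *
          ENNReal.ofReal (r ^ (-(1 + α)))) ∂S := by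
        refine lintegral_congr fun θ => ?_
        rw [← lintegral_one_sub_cos_mul_mul_rpow hα0 hα2]
        refine setLIntegral_congr_fun measurableSet_Ioi fun r _ => ?_
        rw [hσstar, real_inner_smul_right, mul_comm r]
    _ = ∫⁻ y, ENNReal.ofReal (1 - cos ⟪ξ, σ y⟫) ∂να :=
        (lintegral_eq_lintegral_lintegral_smul _ (by fun_prop) S να hνα hf).symm
    _ ≤ ∫⁻ y, ENNReal.ofReal (1 - cos ⟪ξ, σ y⟫) ∂ν := lintegral_mono' hle le_rfl

/-- Lemma 2.7: if `ν ≥ ν^{(α)}` where `ν^{(α)}` is the α-stable measure with spherical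
measure `S` (given in polar form), and `σ` is an invertible matrix (a continuous linear
equivalence of `ℝ^d`), then for all `ξ`,
`∫ (1 − cos⟪ξ, σy⟫) ν(dy) ≥ c_α (inf_{|θ|=1}|σ*θ|^α)(inf_{|θ₀|=1}∫|⟪θ₀,θ⟫|^α S(dθ)) |ξ|^α`,
with `c_α = ∫₀^∞ (1−cos r) r^{-(1+α)} dr ∈ (0,∞)`. -/
theorem stmt8 (d : ℕ) (α : ℝ) (hα : α ∈ Set.Ioo (0:ℝ) 2)
    (S : Measure (EuclideanSpace ℝ (Fin d))) [IsFiniteMeasure S]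
    (hS : ∀ᵐ θ ∂S, ‖θ‖ = 1)
    (να ν : Measure (EuclideanSpace ℝ (Fin d)))
    (hνα : ∀ Γ : Set (EuclideanSpace ℝ (Fin d)), MeasurableSet Γ →
      να Γ = ∫⁻ r in Set.Ioi (0:ℝ),
        (∫⁻ θ, Γ.indicator (fun _ => (1:ℝ≥0∞)) (r • θ) ∂S) * ENNReal.ofReal (r ^ (-(1+α))))
    (hle : να ≤ ν)
    (σ : EuclideanSpace ℝ (Fin d) ≃L[ℝ] EuclideanSpace ℝ (Fin d)) :
    IntegrableOn (fun r => (1 - Real.cos r) / r ^ (1 + α)) (Set.Ioi (0:ℝ)) ∧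
    (0 < ∫ r in Set.Ioi (0:ℝ), (1 - Real.cos r) / r ^ (1 + α)) ∧
    ∀ ξ : EuclideanSpace ℝ (Fin d),
      ENNReal.ofReal ((∫ r in Set.Ioi (0:ℝ), (1 - Real.cos r) / r ^ (1 + α)) *
          ((⨅ θ : Metric.sphere (0 : EuclideanSpace ℝ (Fin d)) 1,
              ‖ContinuousLinearMap.adjoint σ.toContinuousLinearMap θ‖ ^ α) *
            ((⨅ θ₀ : Metric.sphere (0 : EuclideanSpace ℝ (Fin d)) 1,
                ∫ θ, |⟪(θ₀ : EuclideanSpace ℝ (Fin d)), θ⟫| ^ α ∂S) * ‖ξ‖ ^ α)))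
        ≤ ∫⁻ y, ENNReal.ofReal (1 - Real.cos ⟪ξ, σ y⟫) ∂ν :=
  stmt8_general d α hα S να ν hνα hle σ
end

section
/- There exists a dimensional constant C = C(d) > 0 such that for any f ∈ C¹(ℝ^d) with |∇f| locally integrable and all x, y ∈ ℝ^d: |f(x) − f(y)| ≤ C |x−y| (M|∇f|(x) + M|∇f|(y)), where M g(x) := sup_{r>0} (1/|B_r|) ∫_{B_r} |g(x+z)| dz is the Hardy–Littlewood maximal function. -/
open MeasureTheory Set
open scoped ENNReal NNReal

/-- The (uncentered, over balls centered at `x`) Hardy–Littlewood maximal function of `g`,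
`M g(x) = sup_{r>0} (1/|B_r|) ∫_{B_r} |g(x+z)| dz`, valued in `ℝ≥0∞`. -/
noncomputable def maximalFn (d : ℕ) (g : EuclideanSpace ℝ (Fin d) → ℝ)
    (x : EuclideanSpace ℝ (Fin d)) : ℝ≥0∞ :=
  ⨆ (r : ℝ) (_ : 0 < r),
    (∫⁻ z in Metric.closedBall (0 : EuclideanSpace ℝ (Fin d)) r,
        ENNReal.ofReal |g (x + z)| ∂volume)
      / volume (Metric.closedBall (0 : EuclideanSpace ℝ (Fin d)) r)

/-!
Write `f z - f p` as the integral of `∇f` along the segment `[p, z]` and average over `z` in a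
ball `B(p, R)`. After exchanging the two integrals, the slice at time `t` is an average of `|∇f|`
over the ball `B(p, tR)`, rescaled by `t⁻ᵈ` from the homothety `u ↦ t u`; since
`|B_{tR}| = tᵈ |B_R|` the two factors cancel and every slice is at most `|B_R| M|∇f|(p)`, so
`∫_{B(p,R)} |f z - f p| dz ≤ R |B_R| M|∇f|(p)`. For `r = |x - y|`, averaging the triangle inequality
`|f x - f y| ≤ |f z - f x| + |f z - f y|` over `z ∈ B(x, r) ⊆ B(x, 2r) ∩ B(y, 2r)` gives the claim
with `C = 2^(d+1)`.
-/

open Metric Module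

theorem edist_add_le_lintegral_enorm_fderiv {E F : Type*} [NormedAddCommGroup E]
    [NormedSpace ℝ E] [NormedAddCommGroup F] [NormedSpace ℝ F] [CompleteSpace F]
    {f : E → F} (hf : ContDiff ℝ 1 f) (p u : E) :
    edist (f (p + u)) (f p) ≤ ∫⁻ t in Ioc (0 : ℝ) 1, ‖fderiv ℝ f (p + t • u)‖ₑ * ‖u‖ₑ := by
  have hderiv : ∀ t ∈ uIcc (0 : ℝ) 1,
      HasDerivAt (fun s : ℝ => f (p + s • u)) (fderiv ℝ f (p + t • u) u) t := fun t _ =>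
    (hf.differentiable one_ne_zero _).hasFDerivAt.comp_hasDerivAt t
      (((hasDerivAt_id t).smul_const u).const_add p |>.congr_deriv (one_smul ℝ u))
  have hcont : Continuous fun t : ℝ => fderiv ℝ f (p + t • u) u :=
    ((hf.continuous_fderiv one_ne_zero).comp (by fun_prop)).clm_apply continuous_const
  have hftc := intervalIntegral.integral_eq_sub_of_hasDerivAt hderiv (hcont.intervalIntegrable 0 1)
  simp only [one_smul, zero_smul, add_zero] at hftc
  calc edist (f (p + u)) (f p)
      = ‖∫ t in Ioc (0 : ℝ) 1, fderiv ℝ f (p + t • u) u‖ₑ := by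
        rw [edist_eq_enorm_sub, ← hftc, intervalIntegral.integral_of_le zero_le_one]
    _ ≤ ∫⁻ t in Ioc (0 : ℝ) 1, ‖fderiv ℝ f (p + t • u) u‖ₑ :=
        enorm_integral_le_lintegral_enorm _
    _ ≤ ∫⁻ t in Ioc (0 : ℝ) 1, ‖fderiv ℝ f (p + t • u)‖ₑ * ‖u‖ₑ :=
        lintegral_mono fun t => ContinuousLinearMap.le_opENorm _ _

section Homothety

variable {E : Type*} [NormedAddCommGroup E] [NormedSpace ℝ E] [MeasurableSpace E] [BorelSpace E]
  [FiniteDimensional ℝ E] (μ : Measure E) [μ.IsAddHaarMeasure]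

theorem setLIntegral_closedBall_comp_smul (G : E → ℝ≥0∞) {t : ℝ} (ht : 0 < t) (R : ℝ) :
    ∫⁻ u in closedBall 0 R, G (t • u) ∂μ
      = ENNReal.ofReal (t ^ finrank ℝ E)⁻¹ * ∫⁻ v in closedBall 0 (t * R), G v ∂μ := by
  have hg : MeasurableEmbedding (t • · : E → E) :=
    (Homeomorph.smulOfNeZero t ht.ne').measurableEmbedding
  have hball : closedBall (0 : E) R = (t • ·) ⁻¹' closedBall 0 (t * R) := by
    ext u
    simp [norm_smul, abs_of_pos ht, mul_le_mul_iff_right₀ ht]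
  calc ∫⁻ u in closedBall 0 R, G (t • u) ∂μ
      = ∫⁻ v in closedBall 0 (t * R), G v ∂(μ.map (t • ·)) := by
        rw [hg.restrict_map, hg.lintegral_map, hball]
    _ = ENNReal.ofReal (t ^ finrank ℝ E)⁻¹ * ∫⁻ v in closedBall 0 (t * R), G v ∂μ := by
        rw [Measure.map_addHaar_smul μ ht.ne', Measure.restrict_smul, lintegral_smul_measure,
          abs_of_pos (by positivity), smul_eq_mul]

end Homothety

theorem measure_mul_edist_le_setLIntegral_add {X Y : Type*} [PseudoMetricSpace X]
    [MeasurableSpace X] [OpensMeasurableSpace X] [PseudoEMetricSpace Y] (μ : Measure X)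
    {f : X → Y} (hf : Continuous f) {x y : X} {r : ℝ} (hxy : dist x y ≤ r) :
    μ (closedBall x r) * edist (f x) (f y)
      ≤ ∫⁻ z in closedBall x (2 * r), edist (f z) (f x) ∂μ
        + ∫⁻ z in closedBall y (2 * r), edist (f z) (f y) ∂μ := by
  have hr : 0 ≤ r := dist_nonneg.trans hxy
  calc μ (closedBall x r) * edist (f x) (f y)
      = ∫⁻ _ in closedBall x r, edist (f x) (f y) ∂μ := by rw [setLIntegral_const, mul_comm]
    _ ≤ ∫⁻ z in closedBall x r, (edist (f z) (f x) + edist (f z) (f y)) ∂μ :=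
        lintegral_mono fun z => edist_triangle_left _ _ _
    _ = ∫⁻ z in closedBall x r, edist (f z) (f x) ∂μ
          + ∫⁻ z in closedBall x r, edist (f z) (f y) ∂μ :=
        lintegral_add_left (hf.edist continuous_const).measurable _
    _ ≤ _ := add_le_add (lintegral_mono_set (closedBall_subset_closedBall (by linarith)))
        (lintegral_mono_set (closedBall_subset_closedBall' (by linarith)))

section MaximalFunction

variable {d : ℕ}

local notation "E" => EuclideanSpace ℝ (Fin d)

theorem setLIntegral_closedBall_le_maximalFn (g : E → ℝ) (p : E) {s : ℝ} (hs : 0 < s) :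
    ∫⁻ z in closedBall (0 : E) s, ENNReal.ofReal |g (p + z)|
      ≤ volume (closedBall (0 : E) s) * maximalFn d g p := by
  rw [mul_comm, ← ENNReal.div_le_iff (measure_closedBall_pos volume 0 hs).ne'
    measure_closedBall_lt_top.ne]
  exact le_iSup₂ (f := fun r (_ : 0 < r) =>
    (∫⁻ z in closedBall (0 : E) r, ENNReal.ofReal |g (p + z)|) / volume (closedBall (0 : E) r)) s hs

theorem setLIntegral_closedBall_comp_smul_le_maximalFn (g : E → ℝ) (p : E) {t R : ℝ}
    (ht : 0 < t) (hR : 0 < R) :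
    ∫⁻ u in closedBall (0 : E) R, ENNReal.ofReal |g (p + t • u)|
      ≤ volume (closedBall (0 : E) R) * maximalFn d g p := by
  have hvol : volume (closedBall (0 : E) (t * R))
      = ENNReal.ofReal (t ^ d) * volume (closedBall (0 : E) R) := by
    simpa using Measure.addHaar_closedBall_mul volume (0 : E) ht.le hR.le
  calc ∫⁻ u in closedBall (0 : E) R, ENNReal.ofReal |g (p + t • u)|
      = ENNReal.ofReal (t ^ d)⁻¹
          * ∫⁻ v in closedBall (0 : E) (t * R), ENNReal.ofReal |g (p + v)| := by
        simpa using setLIntegral_closedBall_comp_smul volume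
          (fun v => ENNReal.ofReal |g (p + v)|) ht R
    _ ≤ ENNReal.ofReal (t ^ d)⁻¹ * (volume (closedBall (0 : E) (t * R)) * maximalFn d g p) := by
        gcongr
        exact setLIntegral_closedBall_le_maximalFn g p (mul_pos ht hR)
    _ = volume (closedBall (0 : E) R) * maximalFn d g p := by
        rw [hvol, ← mul_assoc, ← mul_assoc, ← ENNReal.ofReal_mul (by positivity),
          inv_mul_cancel₀ (by positivity), ENNReal.ofReal_one, one_mul]

theorem setLIntegral_edist_le_maximalFn_fderiv {f : E → ℝ} (hf : ContDiff ℝ 1 f) (p : E)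
    {R : ℝ} (hR : 0 < R) :
    ∫⁻ z in closedBall p R, edist (f z) (f p)
      ≤ ENNReal.ofReal R * volume (closedBall (0 : E) R)
          * maximalFn d (fun z => ‖fderiv ℝ f z‖) p := by
  set F : E → ℝ → ℝ≥0∞ := fun u t => ‖fderiv ℝ f (p + t • u)‖ₑ * ENNReal.ofReal R
  have hF : Measurable (Function.uncurry F) :=
    ((hf.continuous_fderiv one_ne_zero).comp
      (by fun_prop : Continuous fun q : E × ℝ => p + q.2 • q.1)).enorm.measurable.mul_const _
  calc ∫⁻ z in closedBall p R, edist (f z) (f p)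
      = ∫⁻ u in closedBall (0 : E) R, edist (f (p + u)) (f p) := by
        rw [← (measurePreserving_add_left volume p).setLIntegral_comp_preimage_emb
          (measurableEmbedding_addLeft p), preimage_add_closedBall, sub_self]
    _ ≤ ∫⁻ u in closedBall (0 : E) R, ∫⁻ t in Ioc (0 : ℝ) 1, F u t := by
        refine lintegral_mono_ae <| (ae_restrict_of_forall_mem measurableSet_closedBall)
          fun u hu => (edist_add_le_lintegral_enorm_fderiv hf p u).trans <|
            lintegral_mono fun t => mul_le_mul_right ?_ _
        rw [← ofReal_norm]
        exact ENNReal.ofReal_le_ofReal (mem_closedBall_zero_iff.1 hu)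
    _ = ∫⁻ t in Ioc (0 : ℝ) 1, ∫⁻ u in closedBall (0 : E) R, F u t :=
        lintegral_lintegral_swap hF.aemeasurable
    _ ≤ ∫⁻ _ in Ioc (0 : ℝ) 1, ENNReal.ofReal R * volume (closedBall (0 : E) R)
          * maximalFn d (fun z => ‖fderiv ℝ f z‖) p := by
        refine setLIntegral_mono measurable_const fun t ht => ?_
        have hslice := setLIntegral_closedBall_comp_smul_le_maximalFn
          (fun z => ‖fderiv ℝ f z‖) p ht.1 hR
        simp only [abs_norm, ofReal_norm] at hslice
        rw [lintegral_mul_const' _ _ ENNReal.ofReal_ne_top, mul_comm, mul_assoc]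
        gcongr
    _ = ENNReal.ofReal R * volume (closedBall (0 : E) R)
          * maximalFn d (fun z => ‖fderiv ℝ f z‖) p := by
        simp [Real.volume_Ioc]

end MaximalFunction

/-- Lemma 2.1(i): there is `C = C(d) > 0` such that for every `f ∈ C¹(ℝ^d)` with
locally integrable gradient and all `x, y`,
`|f(x) − f(y)| ≤ C |x−y| (M|∇f|(x) + M|∇f|(y))`. -/
theorem stmt12 (d : ℕ) :
    ∃ C > (0:ℝ), ∀ f : EuclideanSpace ℝ (Fin d) → ℝ, ContDiff ℝ 1 f →
      LocallyIntegrable (fun x => ‖fderiv ℝ f x‖) volume →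
      ∀ x y : EuclideanSpace ℝ (Fin d),
        ENNReal.ofReal |f x - f y|
          ≤ ENNReal.ofReal (C * ‖x - y‖) *
              (maximalFn d (fun z => ‖fderiv ℝ f z‖) x
                + maximalFn d (fun z => ‖fderiv ℝ f z‖) y) := by
  refine ⟨2 ^ (d + 1), by positivity, fun f hf _ x y => ?_⟩
  rcases eq_or_ne x y with rfl | hxy
  · simp
  set r := ‖x - y‖
  have hr : 0 < r := norm_pos_iff.2 (sub_ne_zero.2 hxy)
  have hdouble : volume (closedBall (0 : EuclideanSpace ℝ (Fin d)) (2 * r))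
      = ENNReal.ofReal (2 ^ d) * volume (closedBall (0 : EuclideanSpace ℝ (Fin d)) r) := by
    simpa using Measure.addHaar_closedBall_mul volume (0 : EuclideanSpace ℝ (Fin d))
      zero_le_two hr.le
  rw [← Real.dist_eq, ← edist_dist, ← ENNReal.mul_le_mul_iff_right
    (measure_closedBall_pos volume (0 : EuclideanSpace ℝ (Fin d)) hr).ne'
    measure_closedBall_lt_top.ne]
  calc _ = volume (closedBall x r) * edist (f x) (f y) := by
        rw [Measure.addHaar_closedBall_center volume x r]
    _ ≤ _ := measure_mul_edist_le_setLIntegral_add volume hf.continuous (dist_eq_norm x y).le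
    _ ≤ _ := add_le_add (setLIntegral_edist_le_maximalFn_fderiv hf x (by positivity))
        (setLIntegral_edist_le_maximalFn_fderiv hf y (by positivity))
    _ = _ := by
        rw [hdouble, show (2 : ℝ) ^ (d + 1) * r = 2 ^ d * (2 * r) by ring,
          ENNReal.ofReal_mul (pow_nonneg zero_le_two d)]
        ring
end
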